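/- Let P, A, B be C¹ functions near w₀ ∈ ℝ^d with values in the N×N complex matrices such that A(w₀) and B(w₀) are invertible. If P is of principal type at w₀, then the pointwise matrix product A P B is of principal type at w₀. Moreover, P is of principal type at w₀ if and only if the pointwise conjugate transpose P* is of principal type at w₀. -/

import Mathlib

/-!
With `T = P(w₀)` and `D = ∂_ν P(w₀)`, the map `ker T → ℂ^N ⧸ range T, u ↦ [D u]` goes between
spaces of equal dimension, so bijectivity means both `ker T ⊓ D⁻¹(range T) = ⊥` and
`range T ⊔ D(ker T) = ⊤`. For `A P B` the Leibniz rule gives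
`∂_ν(APB) = A'PB + A D B + APB'`; on `ker (APB)` the first term vanishes and the last one lies
in `range (APB)`, so the first condition passes from `P` to `APB`. Taking orthogonal complements
turns the second condition for `(T, D)` into the first one for `(T*, D*)`, which handles `P*`.
-/

open Matrix

/-- The directional derivative `∂_ν P(w₀)` of a matrix-valued function, taken entrywise. -/
noncomputable def dirDeriv {d N : ℕ} (P : EuclideanSpace ℝ (Fin d) → Matrix (Fin N) (Fin N) ℂ)
    (w₀ ν : EuclideanSpace ℝ (Fin d)) : Matrix (Fin N) (Fin N) ℂ :=
  fun i j => deriv (fun t : ℝ => P (w₀ + t • ν) i j) 0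

/-- `P` is of principal type at `w₀` if for some direction `ν` the map
`Ker P(w₀) ∋ u ↦ ∂_ν P(w₀) u ∈ ℂ^N / Ran P(w₀)` is a bijection. -/
noncomputable def IsPrincipalTypeAt {d N : ℕ}
    (P : EuclideanSpace ℝ (Fin d) → Matrix (Fin N) (Fin N) ℂ)
    (w₀ : EuclideanSpace ℝ (Fin d)) : Prop :=
  ∃ ν : EuclideanSpace ℝ (Fin d),
    Function.Bijective
      ((LinearMap.range (Matrix.toEuclideanLin (P w₀))).mkQ ∘ₗ
        Matrix.toEuclideanLin (dirDeriv P w₀ ν) ∘ₗ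
        (LinearMap.ker (Matrix.toEuclideanLin (P w₀))).subtype)

open LinearMap Submodule

section Module

variable {R M : Type*} [Ring R] [AddCommGroup M] [Module R M]

noncomputable def principalMap (T D : M →ₗ[R] M) : ker T →ₗ[R] M ⧸ range T :=
  (range T).mkQ ∘ₗ D ∘ₗ (ker T).subtype

theorem principalMap_injective_iff (T D : M →ₗ[R] M) :
    Function.Injective (principalMap T D) ↔ ker T ⊓ (range T).comap D = ⊥ := by
  rw [← ker_eq_bot, Submodule.eq_bot_iff, Submodule.eq_bot_iff]
  constructor
  · rintro h u ⟨hTu, hDu⟩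
    simpa using congrArg Subtype.val (h ⟨u, hTu⟩ ((Quotient.mk_eq_zero (range T)).mpr hDu))
  · rintro h ⟨u, hTu⟩ hu
    simpa using h u ⟨hTu, (Quotient.mk_eq_zero (range T)).mp hu⟩

theorem principalMap_surjective_iff (T D : M →ₗ[R] M) :
    Function.Surjective (principalMap T D) ↔ range T ⊔ (ker T).map D = ⊤ := by
  rw [← range_eq_top, principalMap, range_comp, range_comp, range_subtype, map_mkQ_eq_top]

theorem principalMap_injective_comp {a b T D a' b' : M →ₗ[R] M} (ha : Function.Injective a)
    (hb : Function.Injective b) (h : Function.Injective (principalMap T D)) :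
    Function.Injective
      (principalMap (a ∘ₗ T ∘ₗ b) (a' ∘ₗ T ∘ₗ b + a ∘ₗ D ∘ₗ b + a ∘ₗ T ∘ₗ b')) := by
  rw [principalMap_injective_iff, Submodule.eq_bot_iff] at h ⊢
  rintro u ⟨hTu, z, hz⟩
  have hTbu : T (b u) = 0 := ha (by simpa using hTu)
  have hDbu : D (b u) = T (b z - b' u) := by
    refine ha ?_
    simp only [LinearMap.add_apply, LinearMap.comp_apply, hTbu, map_zero, zero_add] at hz
    rw [map_sub, map_sub, hz, add_sub_cancel_right]
  have hbu : b u = 0 := h (b u) ⟨hTbu, b z - b' u, hDbu.symm⟩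
  exact hb (hbu.trans (map_zero b).symm)

end Module

section FiniteDimensional

variable {K V : Type*} [Field K] [AddCommGroup V] [Module K V] [FiniteDimensional K V]

theorem finrank_ker_eq_finrank_quotient_range (T : V →ₗ[K] V) :
    Module.finrank K (ker T) = Module.finrank K (V ⧸ range T) := by
  have := finrank_range_add_finrank_ker T
  have := (range T).finrank_quotient_add_finrank
  omega

theorem principalMap_bijective_iff_injective (T D : V →ₗ[K] V) :
    Function.Bijective (principalMap T D) ↔ Function.Injective (principalMap T D) :=
  ⟨And.left, fun h => ⟨h, (injective_iff_surjective_of_finrank_eq_finrank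
    (finrank_ker_eq_finrank_quotient_range T)).mp h⟩⟩

theorem principalMap_bijective_iff_surjective (T D : V →ₗ[K] V) :
    Function.Bijective (principalMap T D) ↔ Function.Surjective (principalMap T D) :=
  ⟨And.right, fun h => ⟨(injective_iff_surjective_of_finrank_eq_finrank
    (finrank_ker_eq_finrank_quotient_range T)).mpr h, h⟩⟩

theorem principalMap_bijective_comp {a b T D a' b' : V →ₗ[K] V} (ha : Function.Injective a)
    (hb : Function.Injective b) (h : Function.Bijective (principalMap T D)) :
    Function.Bijective
      (principalMap (a ∘ₗ T ∘ₗ b) (a' ∘ₗ T ∘ₗ b + a ∘ₗ D ∘ₗ b + a ∘ₗ T ∘ₗ b')) := by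
  rw [principalMap_bijective_iff_injective] at h ⊢
  exact principalMap_injective_comp ha hb h

end FiniteDimensional

section InnerProductSpace

variable {𝕜 E : Type*} [RCLike 𝕜] [NormedAddCommGroup E] [InnerProductSpace 𝕜 E]
  [FiniteDimensional 𝕜 E]

theorem orthogonal_map_eq_comap_adjoint (D : E →ₗ[𝕜] E) (L : Submodule 𝕜 E) :
    (L.map D)ᗮ = Lᗮ.comap D.adjoint := by
  ext u
  simp only [mem_comap, mem_orthogonal, mem_map, forall_exists_index, and_imp,
    forall_apply_eq_imp_iff₂, adjoint_inner_right]

theorem principalMap_bijective_adjoint_iff (T D : E →ₗ[𝕜] E) :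
    Function.Bijective (principalMap T.adjoint D.adjoint) ↔
      Function.Bijective (principalMap T D) := by
  rw [principalMap_bijective_iff_surjective T D, principalMap_surjective_iff,
    principalMap_bijective_iff_injective, principalMap_injective_iff, ← orthogonal_range,
    ← orthogonal_ker, ← orthogonal_map_eq_comap_adjoint, inf_orthogonal, orthogonal_eq_bot_iff]

end InnerProductSpace

theorem Matrix.toEuclideanLin_injective_of_isUnit {n 𝕜 : Type*} [Fintype n] [DecidableEq n]
    [RCLike 𝕜] {M : Matrix n n 𝕜} (hM : IsUnit M) : Function.Injective (toEuclideanLin M) := fun _ _ h =>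
  WithLp.ofLp_injective 2 (mulVec_injective_iff_isUnit.mpr hM (congrArg WithLp.ofLp h))

section DirDeriv

variable {d N : ℕ} {P Q : EuclideanSpace ℝ (Fin d) → Matrix (Fin N) (Fin N) ℂ}
  {w₀ : EuclideanSpace ℝ (Fin d)}

theorem hasDerivAt_dirDeriv_apply {i j : Fin N}
    (hP : DifferentiableAt ℝ (fun w => P w i j) w₀) (ν : EuclideanSpace ℝ (Fin d)) :
    HasDerivAt (fun t : ℝ => P (w₀ + t • ν) i j) (dirDeriv P w₀ ν i j) 0 := by
  have hline : HasDerivAt (fun t : ℝ => w₀ + t • ν) ν 0 := by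
    simpa using ((hasDerivAt_id (0 : ℝ)).smul_const ν).const_add w₀
  have hP' : DifferentiableAt ℝ (fun w => P w i j) (w₀ + (0 : ℝ) • ν) := by simpa using hP
  exact (hP'.comp 0 hline.differentiableAt).hasDerivAt

theorem differentiableAt_mul_apply (hP : ∀ i j, DifferentiableAt ℝ (fun w => P w i j) w₀)
    (hQ : ∀ i j, DifferentiableAt ℝ (fun w => Q w i j) w₀) (i j : Fin N) :
    DifferentiableAt ℝ (fun w => (P w * Q w) i j) w₀ := by
  simp only [mul_apply]
  exact DifferentiableAt.fun_sum fun k _ => (hP i k).mul (hQ k j)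

theorem dirDeriv_mul (hP : ∀ i j, DifferentiableAt ℝ (fun w => P w i j) w₀)
    (hQ : ∀ i j, DifferentiableAt ℝ (fun w => Q w i j) w₀) (ν : EuclideanSpace ℝ (Fin d)) :
    dirDeriv (fun w => P w * Q w) w₀ ν = dirDeriv P w₀ ν * Q w₀ + P w₀ * dirDeriv Q w₀ ν := by
  ext i j
  have hsum := HasDerivAt.fun_sum fun k (_ : k ∈ Finset.univ) =>
    (hasDerivAt_dirDeriv_apply (hP i k) ν).fun_mul (hasDerivAt_dirDeriv_apply (hQ k j) ν)
  simp only [zero_smul, add_zero] at hsum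
  simp only [dirDeriv, mul_apply, Matrix.add_apply, ← Finset.sum_add_distrib]
  exact hsum.deriv

theorem dirDeriv_conjTranspose (ν : EuclideanSpace ℝ (Fin d)) :
    dirDeriv (fun w => (P w)ᴴ) w₀ ν = (dirDeriv P w₀ ν)ᴴ := by
  ext i j
  exact deriv.star

end DirDeriv

section PrincipalType

variable {d N : ℕ} {P A B : EuclideanSpace ℝ (Fin d) → Matrix (Fin N) (Fin N) ℂ}
  {w₀ : EuclideanSpace ℝ (Fin d)}

theorem isPrincipalTypeAt_iff : IsPrincipalTypeAt P w₀ ↔ ∃ ν, Function.Bijective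
    (principalMap (toEuclideanLin (P w₀)) (toEuclideanLin (dirDeriv P w₀ ν))) :=
  Iff.rfl

theorem IsPrincipalTypeAt.mul (hPt : IsPrincipalTypeAt P w₀)
    (hP : ∀ i j, DifferentiableAt ℝ (fun w => P w i j) w₀)
    (hA : ∀ i j, DifferentiableAt ℝ (fun w => A w i j) w₀)
    (hB : ∀ i j, DifferentiableAt ℝ (fun w => B w i j) w₀)
    (hAinv : IsUnit (A w₀)) (hBinv : IsUnit (B w₀)) :
    IsPrincipalTypeAt (fun w => A w * P w * B w) w₀ := by
  obtain ⟨ν, hν⟩ := isPrincipalTypeAt_iff.mp hPt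
  refine isPrincipalTypeAt_iff.mpr ⟨ν, ?_⟩
  have hT : toEuclideanLin (A w₀ * P w₀ * B w₀) =
      toEuclideanLin (A w₀) ∘ₗ toEuclideanLin (P w₀) ∘ₗ toEuclideanLin (B w₀) := by
    simp only [toLpLin_mul_same, comp_assoc]
  rw [dirDeriv_mul (differentiableAt_mul_apply hA hP) hB, dirDeriv_mul hA hP, hT]
  simp only [Matrix.add_mul, map_add, toLpLin_mul_same, comp_assoc]
  exact principalMap_bijective_comp (toEuclideanLin_injective_of_isUnit hAinv)
    (toEuclideanLin_injective_of_isUnit hBinv) hν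

theorem isPrincipalTypeAt_conjTranspose_iff :
    IsPrincipalTypeAt (fun w => (P w)ᴴ) w₀ ↔ IsPrincipalTypeAt P w₀ := by
  simp only [isPrincipalTypeAt_iff, dirDeriv_conjTranspose]
  refine exists_congr fun ν => ?_
  rw [toEuclideanLin_conjTranspose_eq_adjoint, toEuclideanLin_conjTranspose_eq_adjoint]
  exact principalMap_bijective_adjoint_iff _ _

end PrincipalType

/-- **Remark 3.2.** If `P` is of principal type at `w₀` and `A`, `B` are `C¹` near `w₀` with
`A(w₀)`, `B(w₀)` invertible, then `A P B` is of principal type at `w₀`. Moreover, `P` is of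
principal type at `w₀` if and only if the conjugate transpose `P*` is. -/
theorem principalType_mul_and_adjoint {d N : ℕ}
    (P A B : EuclideanSpace ℝ (Fin d) → Matrix (Fin N) (Fin N) ℂ)
    (w₀ : EuclideanSpace ℝ (Fin d))
    (hP : ∀ i j, ContDiffAt ℝ 1 (fun w => P w i j) w₀)
    (hA : ∀ i j, ContDiffAt ℝ 1 (fun w => A w i j) w₀)
    (hB : ∀ i j, ContDiffAt ℝ 1 (fun w => B w i j) w₀)
    (hAinv : IsUnit (A w₀)) (hBinv : IsUnit (B w₀)) :
    (IsPrincipalTypeAt P w₀ → IsPrincipalTypeAt (fun w => A w * P w * B w) w₀) ∧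
    (IsPrincipalTypeAt P w₀ ↔ IsPrincipalTypeAt (fun w => (P w)ᴴ) w₀) :=
  ⟨fun hPt => hPt.mul (fun i j => (hP i j).differentiableAt_one)
      (fun i j => (hA i j).differentiableAt_one) (fun i j => (hB i j).differentiableAt_one)
      hAinv hBinv,
    isPrincipalTypeAt_conjTranspose_iff.symm⟩
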